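/- Fix an integer q ≥ 2, let b_m denote the number of 1-unbordered words of length m over ℤ/qℤ, and let β = ∑_{m≥0} b_m X^m ∈ ℤ[[X]]. Then (1 − qX)·β(X) = 3 − 2·β(X²), where β(X²) denotes the power series obtained from β by substituting X² for X. -/

import Mathlib

/-- For a word `W` over `ℤ/qℤ`, `addOneFirst W` is the word `W'` obtained by adding `1`
to the first letter of `W` (and the empty word for the empty word). -/
def addOneFirst {q : ℕ} : List (ZMod q) → List (ZMod q)
  | [] => []
  | x :: xs => (x + 1) :: xs

/-- A word `W` over `ℤ/qℤ` is 1-unbordered if no nonempty proper suffix of `W` is equal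
to a prefix of `W` or to a prefix of `W'` (where `W'` is `W` with `1` added to its first
letter). -/
def OneUnbordered {q : ℕ} (W : List (ZMod q)) : Prop :=
  ∀ S : List (ZMod q), S ≠ [] → S.length < W.length → S <:+ W →
    ¬ S <+: W ∧ ¬ S <+: addOneFirst W

/-- The number of 1-unbordered words of length `m` over `ℤ/qℤ`. -/
noncomputable def countOneUnbordered (q m : ℕ) : ℕ :=
  Nat.card {w : List (ZMod q) // w.length = m ∧ OneUnbordered w}

/-- Substituting `X²` for `X` in a formal power series over `ℤ`:
the coefficient of `X^m` in `φ(X²)` is the coefficient of `X^(m/2)` in `φ` when `m` is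
even, and `0` otherwise. -/
noncomputable def substXsq (φ : PowerSeries ℤ) : PowerSeries ℤ :=
  PowerSeries.mk fun m => if 2 ∣ m then PowerSeries.coeff (R := ℤ) (m / 2) φ else 0

/-!
Call `s` a quasi-period of `W` when `W.drop s` is a prefix of `W` or of `W'`, so that `W` is
1-unbordered iff it has no quasi-period `0 < s < |W|`. Quasi-periods add, hence only those with
`|W| ≤ 2s` matter, and these never compare the middle letter of `W` with anything, except for
`s = k` when `|W| = 2k`. So the middle letter of a 1-unbordered word of odd length is free,
`b (2k+1) = q b (2k)`; in even length `2k`, the insertions of a middle letter into a 1-unbordered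
word of length `2k - 1` that create the quasi-period `k` are exactly the words `P ++ P` and
`P ++ P'` with `P` 1-unbordered of length `k`, so `b (2k) = q b (2k-1) - 2 b k`. Together with
`b 0 = 1` these recurrences are the coefficients of the functional equation.
-/

section General

variable {α : Type*}

lemma eraseIdx_append_length (P V : List α) :
    (P ++ V).eraseIdx P.length = P ++ V.tail := by
  rw [List.eraseIdx_append_of_length_le le_rfl, Nat.sub_self, List.eraseIdx_zero]

lemma card_length_eq_succ_eraseIdx (P : List α → Prop) {n p : ℕ} (hp : p ≤ n) :
    Nat.card {W : List α // W.length = n + 1 ∧ P (W.eraseIdx p)} =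
      Nat.card {U : List α // U.length = n ∧ P U} * Nat.card α := by
  rw [← Nat.card_prod]
  refine Nat.card_congr
    { toFun W := (⟨W.1.eraseIdx p, ?_, W.2.2⟩, W.1[p]'(by omega))
      invFun U := ⟨U.1.1.insertIdx p U.2, ?_, ?_⟩
      left_inv W := Subtype.ext (List.insertIdx_eraseIdx_getElem _)
      right_inv U := ?_ }
  · rw [List.length_eraseIdx_of_lt (by omega), W.2.1]; rfl
  · rw [List.length_insertIdx_of_le_length (by rw [U.1.2.1]; exact hp), U.1.2.1]
  · rw [List.eraseIdx_insertIdx_self]; exact U.1.2.2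
  · ext
    · simp [List.eraseIdx_insertIdx_self]
    · simp [List.getElem_insertIdx_self]

end General

section Words

variable {q : ℕ}

lemma take_addOneFirst (W : List (ZMod q)) (p : ℕ) :
    (addOneFirst W).take p = addOneFirst (W.take p) := by
  cases W <;> cases p <;> rfl

lemma drop_addOneFirst (W : List (ZMod q)) {s : ℕ} (hs : 0 < s) :
    (addOneFirst W).drop s = W.drop s := by
  obtain ⟨s, rfl⟩ := Nat.exists_eq_add_of_lt hs
  cases W <;> rfl

@[simp]
lemma length_addOneFirst (W : List (ZMod q)) : (addOneFirst W).length = W.length := by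
  cases W <;> rfl

@[simp]
lemma tail_addOneFirst (W : List (ZMod q)) : (addOneFirst W).tail = W.tail := by
  cases W <;> rfl

def IsQuasiPeriod (W : List (ZMod q)) (s : ℕ) : Prop :=
  W.drop s <+: W ∨ W.drop s <+: addOneFirst W

lemma IsQuasiPeriod.add {W : List (ZMod q)} {s t : ℕ} (hs : IsQuasiPeriod W s)
    (ht : IsQuasiPeriod W t) (ht0 : 0 < t) : IsQuasiPeriod W (s + t) := by
  have key : W.drop (s + t) <+: W.drop t := by
    rw [← List.drop_drop, ← drop_addOneFirst W ht0]
    rcases hs with hs | hs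
    · exact (hs.drop t).trans (by rw [drop_addOneFirst W ht0])
    · exact hs.drop t
  rcases ht with ht | ht
  · exact Or.inl (key.trans ht)
  · exact Or.inr (key.trans ht)

lemma oneUnbordered_iff_forall_not_isQuasiPeriod (W : List (ZMod q)) :
    OneUnbordered W ↔ ∀ s, 0 < s → s < W.length → ¬IsQuasiPeriod W s := by
  simp only [OneUnbordered, IsQuasiPeriod, not_or]
  constructor
  · intro h s hs hsn
    exact h _ (by simp; omega) (by simp; omega) (W.drop_suffix s)
  · intro h S hS hSn hSW
    have := List.length_pos_iff.mpr hS
    rw [List.suffix_iff_eq_drop.mp hSW]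
    exact h _ (by omega) (by omega)

lemma IsQuasiPeriod.exists_long {W : List (ZMod q)} {s : ℕ} (h : IsQuasiPeriod W s)
    (hs : 0 < s) (hsn : s < W.length) :
    ∃ t, IsQuasiPeriod W t ∧ W.length ≤ 2 * t ∧ t < W.length := by
  by_cases hlong : W.length ≤ 2 * s
  · exact ⟨s, h, hlong, hsn⟩
  · have h2 : IsQuasiPeriod W (2 * s) := by rw [two_mul]; exact h.add h hs
    exact h2.exists_long (by omega) (by omega)
termination_by W.length - s

lemma oneUnbordered_iff_forall_long (W : List (ZMod q)) :
    OneUnbordered W ↔ ∀ s, W.length ≤ 2 * s → s < W.length → ¬IsQuasiPeriod W s := by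
  rw [oneUnbordered_iff_forall_not_isQuasiPeriod]
  refine ⟨fun h s hs hsn => h s (by omega) hsn, fun h s hs hsn hqp => ?_⟩
  obtain ⟨t, hqt, ht, htn⟩ := hqp.exists_long hs hsn
  exact h t ht htn hqt

lemma isQuasiPeriod_iff_of_drop_eq_of_take_eq {V W : List (ZMod q)} {s t p : ℕ}
    (hd : V.drop s = W.drop t) (ht : V.take p = W.take p) (hp : (W.drop t).length ≤ p) :
    IsQuasiPeriod V s ↔ IsQuasiPeriod W t := by
  have prefix_iff {X : List (ZMod q)} (hX : X.length ≤ p) (Y : List (ZMod q)) :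
      X <+: Y ↔ X <+: Y.take p := by
    rw [List.prefix_take_iff, and_iff_left hX]
  simp only [IsQuasiPeriod]
  rw [prefix_iff (hd ▸ hp) V, prefix_iff (hd ▸ hp) (addOneFirst V), prefix_iff hp W,
    prefix_iff hp (addOneFirst W), take_addOneFirst, take_addOneFirst, ht, hd]

lemma isQuasiPeriod_eraseIdx_iff {W : List (ZMod q)} {p s : ℕ} (hps : p ≤ s)
    (hs : W.length ≤ p + s + 1) :
    IsQuasiPeriod (W.eraseIdx p) s ↔ IsQuasiPeriod W (s + 1) := by
  refine isQuasiPeriod_iff_of_drop_eq_of_take_eq (p := p) ?_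
    (List.take_eraseIdx_eq_take_of_le W p p le_rfl) (by simp; omega)
  rw [List.eraseIdx_eq_take_drop_succ, List.drop_append, List.drop_drop,
    List.drop_eq_nil_of_le (by simp; omega), List.nil_append]
  rcases le_total p W.length with hpW | hpW
  · rw [List.length_take_of_le hpW]
    congr 1
    omega
  · rw [List.drop_eq_nil_of_le (by omega), List.drop_eq_nil_of_le (by omega)]

lemma isQuasiPeriod_append_tail_iff (P : List (ZMod q)) {t : ℕ} (ht : 0 < t) :
    IsQuasiPeriod (P ++ P.tail) (P.length - 1 + t) ↔ IsQuasiPeriod P t := by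
  refine isQuasiPeriod_iff_of_drop_eq_of_take_eq (p := P.length) ?_
    (by rw [List.take_left' rfl, List.take_length]) (by simp)
  obtain ⟨t, rfl⟩ := Nat.exists_eq_add_of_lt ht
  rcases P with _ | ⟨x, P⟩
  · simp
  · rw [List.drop_append, List.drop_eq_nil_of_le (by simp), List.nil_append]
    simp [show P.length + (t + 1) - (P.length + 1) = t by omega]

lemma isQuasiPeriod_append_iff {P V : List (ZMod q)} (h : V.length = P.length) :
    IsQuasiPeriod (P ++ V) P.length ↔ V = P ∨ V = addOneFirst P := by
  rw [IsQuasiPeriod, List.drop_left, List.prefix_iff_eq_take, List.prefix_iff_eq_take, h,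
    take_addOneFirst, List.take_left' rfl]

lemma oneUnbordered_iff_eraseIdx_of_length_eq_two_mul_add_one {W : List (ZMod q)} {k : ℕ}
    (hW : W.length = 2 * k + 1) : OneUnbordered W ↔ OneUnbordered (W.eraseIdx k) := by
  have hlen : (W.eraseIdx k).length = 2 * k := by
    rw [List.length_eraseIdx_of_lt (by omega)]; omega
  rw [oneUnbordered_iff_forall_long, oneUnbordered_iff_forall_long, hW, hlen]
  constructor
  · intro h s hs hsn
    rw [isQuasiPeriod_eraseIdx_iff (by omega) (by omega)]
    exact h (s + 1) (by omega) (by omega)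
  · intro h s hs hsn
    obtain ⟨s, rfl⟩ : ∃ t, s = t + 1 := ⟨s - 1, by omega⟩
    rw [← isQuasiPeriod_eraseIdx_iff (p := k) (s := s) (by omega) (by omega)]
    exact h s (by omega) (by omega)

lemma oneUnbordered_iff_eraseIdx_of_length_eq_two_mul {W : List (ZMod q)} {k : ℕ} (hk : 0 < k)
    (hW : W.length = 2 * k) :
    OneUnbordered W ↔ OneUnbordered (W.eraseIdx k) ∧ ¬IsQuasiPeriod W k := by
  have hlen : (W.eraseIdx k).length = 2 * k - 1 := by
    rw [List.length_eraseIdx_of_lt (by omega), hW]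
  rw [oneUnbordered_iff_forall_long, oneUnbordered_iff_forall_long, hW, hlen]
  constructor
  · intro h
    refine ⟨fun s hs hsn => ?_, h k (by omega) (by omega)⟩
    rw [isQuasiPeriod_eraseIdx_iff (by omega) (by omega)]
    exact h (s + 1) (by omega) (by omega)
  · rintro ⟨h, hQk⟩ s hs hsn
    rcases (show k ≤ s by omega).eq_or_lt with rfl | hks
    · exact hQk
    · obtain ⟨s, rfl⟩ : ∃ t, s = t + 1 := ⟨s - 1, by omega⟩
      rw [← isQuasiPeriod_eraseIdx_iff (p := k) (s := s) (by omega) (by omega)]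
      exact h s (by omega) (by omega)

lemma oneUnbordered_append_tail_iff (P : List (ZMod q)) :
    OneUnbordered (P ++ P.tail) ↔ OneUnbordered P := by
  have hlen : (P ++ P.tail).length = P.length + (P.length - 1) := by simp
  rw [oneUnbordered_iff_forall_long, oneUnbordered_iff_forall_not_isQuasiPeriod, hlen]
  constructor
  · intro h t ht htn
    rw [← isQuasiPeriod_append_tail_iff P ht]
    exact h _ (by omega) (by omega)
  · intro h s hs hsn
    obtain ⟨t, rfl⟩ : ∃ t, s = P.length - 1 + t := ⟨s + 1 - P.length, by omega⟩
    rw [isQuasiPeriod_append_tail_iff P (by omega)]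
    exact h t (by omega) (by omega)

lemma oneUnbordered_eraseIdx_and_isQuasiPeriod_append_iff {P V : List (ZMod q)}
    (h : V.length = P.length) :
    OneUnbordered ((P ++ V).eraseIdx P.length) ∧ IsQuasiPeriod (P ++ V) P.length ↔
      OneUnbordered P ∧ (V = P ∨ V = addOneFirst P) := by
  rw [eraseIdx_append_length, isQuasiPeriod_append_iff h]
  constructor
  · rintro ⟨hou, hV⟩
    refine ⟨?_, hV⟩
    rcases hV with rfl | rfl
    · rwa [oneUnbordered_append_tail_iff] at hou
    · rwa [tail_addOneFirst, oneUnbordered_append_tail_iff] at hou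
  · rintro ⟨hou, hV⟩
    refine ⟨?_, hV⟩
    rcases hV with rfl | rfl
    · rwa [oneUnbordered_append_tail_iff]
    · rwa [tail_addOneFirst, oneUnbordered_append_tail_iff]

end Words

lemma countOneUnbordered_zero (q : ℕ) : countOneUnbordered q 0 = 1 := by
  have hnil : OneUnbordered ([] : List (ZMod q)) :=
    (oneUnbordered_iff_forall_long []).mpr fun s _ hs => absurd hs (by simp)
  rw [countOneUnbordered, Nat.card_eq_one_iff_exists]
  exact ⟨⟨[], rfl, hnil⟩, fun W => Subtype.ext (List.eq_nil_of_length_eq_zero W.2.1)⟩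

lemma countOneUnbordered_two_mul_add_one (q k : ℕ) :
    countOneUnbordered q (2 * k + 1) = countOneUnbordered q (2 * k) * q := by
  calc countOneUnbordered q (2 * k + 1)
      = Nat.card {W : List (ZMod q) // W.length = 2 * k + 1 ∧ OneUnbordered (W.eraseIdx k)} :=
        Nat.card_congr <| Equiv.subtypeEquivRight fun W => and_congr_right
          oneUnbordered_iff_eraseIdx_of_length_eq_two_mul_add_one
    _ = countOneUnbordered q (2 * k) * q := by
        rw [card_length_eq_succ_eraseIdx _ (by omega), Nat.card_zmod]; rfl

lemma card_oneUnbordered_eraseIdx_isQuasiPeriod {q : ℕ} [Nontrivial (ZMod q)] {n : ℕ}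
    (hn : 0 < n) :
    Nat.card {W : List (ZMod q) //
      (W.length = 2 * n ∧ OneUnbordered (W.eraseIdx n)) ∧ IsQuasiPeriod W n} =
      2 * countOneUnbordered q n := by
  have hcard : Nat.card ({P : List (ZMod q) // P.length = n ∧ OneUnbordered P} × Bool) =
      2 * countOneUnbordered q n := by
    rw [Nat.card_prod, mul_comm, show Nat.card Bool = 2 by simp]; rfl
  rw [← hcard]
  symm
  refine Nat.card_eq_of_bijective
    (fun x => ⟨x.1.1 ++ cond x.2 (addOneFirst x.1.1) x.1.1, ?_⟩) ⟨?_, ?_⟩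
  · obtain ⟨⟨P, rfl, hP⟩, b⟩ := x
    have hV : (cond b (addOneFirst P) P).length = P.length := by cases b <;> simp
    obtain ⟨hou, hqp⟩ :=
      (oneUnbordered_eraseIdx_and_isQuasiPeriod_append_iff hV).mpr ⟨hP, by cases b <;> simp⟩
    exact ⟨⟨by simp [hV, two_mul], hou⟩, hqp⟩
  · rintro ⟨⟨P₁, hP₁, _⟩, b₁⟩ ⟨⟨P₂, hP₂, _⟩, b₂⟩ h
    obtain ⟨rfl, hV⟩ := List.append_inj (congrArg Subtype.val h) (hP₁.trans hP₂.symm)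
    have hne : P₁ ≠ addOneFirst P₁ := by
      rcases P₁ with _ | ⟨x, P⟩
      · simp at hP₁; omega
      · simp [addOneFirst]
    cases b₁ <;> cases b₂ <;> dsimp only [cond_true, cond_false] at hV
    · rfl
    · exact absurd hV hne
    · exact absurd hV.symm hne
    · rfl
  · rintro ⟨W, ⟨hW, hou⟩, hqp⟩
    have hP : (W.take n).length = n := by simp; omega
    have hV : (W.drop n).length = (W.take n).length := by simp; omega
    obtain ⟨hPou, hVP | hVP⟩ := (oneUnbordered_eraseIdx_and_isQuasiPeriod_append_iff hV).mp
      (by rw [hP, List.take_append_drop]; exact ⟨hou, hqp⟩)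
    · exact ⟨(⟨W.take n, hP, hPou⟩, false),
        Subtype.ext (by simpa [hVP] using W.take_append_drop n)⟩
    · exact ⟨(⟨W.take n, hP, hPou⟩, true),
        Subtype.ext (by simpa [hVP] using W.take_append_drop n)⟩

lemma countOneUnbordered_two_mul {q : ℕ} (hq : 1 < q) {n : ℕ} (hn : 0 < n) :
    countOneUnbordered q (2 * n) + 2 * countOneUnbordered q n =
      countOneUnbordered q (2 * n - 1) * q := by
  have : Fact (1 < q) := ⟨hq⟩
  set E : Set (List (ZMod q)) := {W | W.length = 2 * n ∧ OneUnbordered (W.eraseIdx n)}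
  have hE : Nat.card E = countOneUnbordered q (2 * n - 1) * q := by
    have := card_length_eq_succ_eraseIdx (α := ZMod q) OneUnbordered
      (n := 2 * n - 1) (p := n) (by omega)
    rwa [Nat.sub_add_cancel (by omega), Nat.card_zmod] at this
  have hdiff : E \ {W | IsQuasiPeriod W n} = {W | W.length = 2 * n ∧ OneUnbordered W} := by
    ext W
    simp only [E, Set.mem_sdiff, Set.mem_ofPred_eq]
    constructor
    · rintro ⟨⟨hW, hou⟩, hqp⟩
      exact ⟨hW, (oneUnbordered_iff_eraseIdx_of_length_eq_two_mul hn hW).mpr ⟨hou, hqp⟩⟩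
    · rintro ⟨hW, hou⟩
      obtain ⟨hou', hqp⟩ := (oneUnbordered_iff_eraseIdx_of_length_eq_two_mul hn hW).mp hou
      exact ⟨⟨hW, hou'⟩, hqp⟩
  have hsplit := Set.ncard_inter_add_ncard_sdiff_eq_ncard E {W | IsQuasiPeriod W n}
    ((List.finite_length_eq _ (2 * n)).subset fun _ hW => hW.1)
  rw [hdiff, ← Nat.card_coe_set_eq, ← Nat.card_coe_set_eq, ← Nat.card_coe_set_eq, hE,
    show Nat.card ↑(E ∩ {W | IsQuasiPeriod W n}) = 2 * countOneUnbordered q n from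
      card_oneUnbordered_eraseIdx_isQuasiPeriod hn] at hsplit
  rw [add_comm]
  exact hsplit

lemma countOneUnbordered_succ_sub_mul {q : ℕ} (hq : 1 < q) (n : ℕ) :
    (countOneUnbordered q (n + 1) : ℤ) - q * countOneUnbordered q n =
      -2 * if 2 ∣ n + 1 then (countOneUnbordered q ((n + 1) / 2) : ℤ) else 0 := by
  obtain ⟨k, rfl | rfl⟩ := Nat.even_or_odd' n
  · rw [if_neg (by omega), countOneUnbordered_two_mul_add_one]
    push_cast
    ring
  · have h := countOneUnbordered_two_mul hq (n := k + 1) (by omega)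
    rw [show 2 * (k + 1) - 1 = 2 * k + 1 by omega, show 2 * (k + 1) = 2 * k + 1 + 1 by ring] at h
    rw [if_pos ⟨k + 1, by ring⟩, show (2 * k + 1 + 1) / 2 = k + 1 by omega]
    have h' := congrArg (Nat.cast : ℕ → ℤ) h
    push_cast at h'
    linarith

open PowerSeries in
lemma one_sub_C_mul_X_mul_mk_eq_of_recurrence (a : ℤ) {b : ℕ → ℤ} (h0 : b 0 = 1)
    (hb : ∀ n, b (n + 1) - a * b n = -2 * if 2 ∣ n + 1 then b ((n + 1) / 2) else 0) :
    (1 - C a * X) * mk b = 3 - 2 * substXsq (mk b) := by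
  ext n
  rw [show (3 : ℤ⟦X⟧) = C 3 from (map_ofNat _ _).symm,
    show (2 : ℤ⟦X⟧) = C 2 from (map_ofNat _ _).symm, sub_mul, one_mul, mul_assoc, map_sub,
    map_sub, coeff_C_mul, coeff_C_mul, coeff_C, substXsq, coeff_mk, coeff_mk]
  rcases n with _ | n
  · simp [h0]
  · rw [coeff_succ_X_mul, coeff_mk, if_neg n.succ_ne_zero, hb]
    split_ifs <;> simp

/-- For `q ≥ 2`, the generating function `β = ∑ b_m X^m ∈ ℤ[[X]]` of the numbers `b_m`
of 1-unbordered words of length `m` over `ℤ/qℤ` satisfies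
`(1 − qX)·β(X) = 3 − 2·β(X²)`. -/
theorem oneUnbordered_gf_functional_equation (q : ℕ) (hq : 2 ≤ q)
    (β : PowerSeries ℤ)
    (hβ : β = PowerSeries.mk fun m => (countOneUnbordered q m : ℤ)) :
    (1 - (q : PowerSeries ℤ) * PowerSeries.X) * β = 3 - 2 * substXsq β := by
  rw [hβ, ← map_natCast PowerSeries.C q]
  exact one_sub_C_mul_X_mul_mk_eq_of_recurrence _ (by simp [countOneUnbordered_zero])
    (countOneUnbordered_succ_sub_mul hq)
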